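/- arXiv:1603.09556 — 3 statements merged into one kernel-verified Lean document; each statement's English description precedes it below -/
import Mathlib

section
/- Let p be a prime, ν a positive integer, and a a nonzero integer with α := ord_p(a) satisfying 0 ≤ α < ν. If b is an integer with p^α not dividing b, then G(a,b;p^ν) = 0. -/
/-- The generalized Gauss sum `G(a,b;c) = ∑_{n mod c} e^{2πi(an² + bn)/c}`,
with the sum taken over the complete residue system `{0, 1, …, c-1}`. -/
noncomputable def gaussSumG (a b : ℤ) (c : ℕ) : ℂ :=
  ∑ n ∈ Finset.range c,
    Complex.exp (2 * Real.pi * Complex.I * (((a * n ^ 2 + b * n : ℤ) : ℂ) / (c : ℂ)))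

/-- Lemma 3.1 (2), vanishing part: for `p` prime, `a ≠ 0` with `α := ord_p(a) < ν`,
and `p^α ∤ b`, the Gauss sum `G(a,b;p^ν)` vanishes. -/
theorem gaussSum_eq_zero_of_not_dvd (p : ℕ) (hp : p.Prime) (ν : ℕ) (hν : 1 ≤ ν)
    (a : ℤ) (ha : a ≠ 0) (α : ℕ) (hα : α = padicValInt p a) (hαν : α < ν)
    (b : ℤ) (hb : ¬ (p : ℤ) ^ α ∣ b) :
    gaussSumG a b (p ^ ν) = 0 := by
  classical
  haveI : Fact p.Prime := ⟨hp⟩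
  set c : ℕ := p ^ ν with hc
  have hc0 : 0 < c := pow_pos hp.pos ν
  haveI : NeZero c := ⟨hc0.ne'⟩
  have hcne : (c : ℂ) ≠ 0 := Nat.cast_ne_zero.mpr hc0.ne'
  set e : ℤ → ℂ := fun k => Complex.exp (2 * Real.pi * Complex.I * ((k : ℂ) / (c : ℂ)))
    with he
  have e_add : ∀ j k : ℤ, e (j + k) = e j * e k := by
    intro j k
    simp only [he]
    rw [← Complex.exp_add]
    congr 1
    push_cast
    ring
  have e_mul_c : ∀ t : ℤ, e ((c : ℤ) * t) = 1 := by
    intro t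
    simp only [he]
    rw [show (2 * (Real.pi : ℂ) * Complex.I * ((((c : ℤ) * t : ℤ) : ℂ) / (c : ℂ)))
        = (t : ℂ) * (2 * Real.pi * Complex.I) by
      push_cast
      field_simp]
    exact Complex.exp_int_mul_two_pi_mul_I t
  have e_congr : ∀ x y : ℤ, x ≡ y [ZMOD (c : ℤ)] → e x = e y := by
    intro x y h
    obtain ⟨t, ht⟩ := Int.ModEq.dvd h
    have : y = x + (c : ℤ) * t := by linarith
    rw [this, e_add, e_mul_c, mul_one]
  -- m and divisibility facts
  set m : ℕ := p ^ (ν - α) with hm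
  have hcam : (c : ℤ) ∣ a * m := by
    have h1 : (p : ℤ) ^ α ∣ a := hα ▸ padicValInt_dvd a
    obtain ⟨a', ha'⟩ := h1
    refine ⟨a', ?_⟩
    have hν' : ν = α + (ν - α) := (Nat.add_sub_cancel' hαν.le).symm
    rw [hc, hm, hν', pow_add, ha']
    have h2 : α + (ν - α) - α = ν - α := by omega
    push_cast
    rw [h2]
    ring
  -- the multiplier value
  have key_ne : e (b * m) ≠ 1 := by
    intro hbm
    apply hb
    simp only [he] at hbm
    rw [Complex.exp_eq_one_iff] at hbm
    obtain ⟨n, hn⟩ := hbm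
    rw [mul_comm ((n : ℂ)) _] at hn
    have h2 : ((b * (m : ℤ) : ℤ) : ℂ) / (c : ℂ) = (n : ℂ) :=
      mul_left_cancel₀ Complex.two_pi_I_ne_zero hn
    rw [div_eq_iff hcne] at h2
    have h4 : b * (m : ℤ) = n * (c : ℤ) := by exact_mod_cast h2
    have h5 : (c : ℤ) = (p : ℤ) ^ α * (m : ℤ) := by
      rw [hc, hm]
      push_cast
      rw [← pow_add, Nat.add_sub_cancel' hαν.le]
    have hm0 : (m : ℤ) ≠ 0 :=
      Int.natCast_ne_zero.mpr (pow_ne_zero _ hp.pos.ne')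
    have h6 : b = n * (p : ℤ) ^ α := by
      have := h4
      rw [h5] at this
      have : b * (m : ℤ) = (n * (p : ℤ) ^ α) * (m : ℤ) := by linarith [this]
      exact mul_right_cancel₀ hm0 this
    exact ⟨n, by linarith [h6]⟩
  -- F on ZMod c
  set F : ZMod c → ℂ := fun x => e (a * (x.val : ℤ) ^ 2 + b * (x.val : ℤ)) with hF
  have hGsum : gaussSumG a b c = ∑ x : ZMod c, F x := by
    rw [gaussSumG]
    refine Finset.sum_nbij' (fun n => (n : ZMod c)) (fun x => x.val) ?_ ?_ ?_ ?_ ?_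
    · intro n hn; exact Finset.mem_univ _
    · intro x hx; exact Finset.mem_range.mpr (ZMod.val_lt x)
    · intro n hn
      exact ZMod.val_natCast_of_lt (Finset.mem_range.mp hn)
    · intro x hx; exact ZMod.natCast_rightInverse x
    · intro n hn
      simp only [hF, he]
      rw [ZMod.val_natCast_of_lt (Finset.mem_range.mp hn)]
  have hshift : ∀ x : ZMod c, F (x + (m : ZMod c)) = e (b * m) * F x := by
    intro x
    have hmod : (((x + (m : ZMod c)).val : ℤ)) ≡ ((x.val : ℤ) + (m : ℤ)) [ZMOD (c : ℤ)] := by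
      rw [← ZMod.intCast_eq_intCast_iff]
      push_cast
      simp [ZMod.natCast_val, ZMod.cast_id]
    have hcong : e (a * ((x + (m : ZMod c)).val : ℤ) ^ 2 + b * ((x + (m : ZMod c)).val : ℤ))
        = e (a * ((x.val : ℤ) + (m : ℤ)) ^ 2 + b * ((x.val : ℤ) + (m : ℤ))) := by
      apply e_congr
      exact (hmod.pow 2).mul_left a |>.add (hmod.mul_left b)
    have hexpand : a * ((x.val : ℤ) + (m : ℤ)) ^ 2 + b * ((x.val : ℤ) + (m : ℤ))
        = (a * (x.val : ℤ) ^ 2 + b * (x.val : ℤ)) + (b * (m : ℤ))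
          + (a * (m : ℤ)) * (2 * (x.val : ℤ) + (m : ℤ)) := by ring
    obtain ⟨t, ht⟩ := hcam
    simp only [hF]
    rw [hcong, hexpand, e_add, e_add, ht]
    rw [mul_assoc (c : ℤ) t _, e_mul_c, mul_one]
    ring
  have hsum_eq : ∑ x : ZMod c, F x = e (b * m) * ∑ x : ZMod c, F x := by
    have h1 : ∑ x : ZMod c, F (x + (m : ZMod c)) = ∑ x : ZMod c, F x :=
      Fintype.sum_equiv (Equiv.addRight (m : ZMod c)) _ _ (fun x => rfl)
    calc ∑ x : ZMod c, F x = ∑ x : ZMod c, F (x + (m : ZMod c)) := h1.symm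
      _ = ∑ x : ZMod c, e (b * m) * F x := by simp only [hshift]
      _ = e (b * m) * ∑ x : ZMod c, F x := by rw [Finset.mul_sum]
  have : (e (b * m) - 1) * ∑ x : ZMod c, F x = 0 := by
    rw [sub_mul, one_mul, ← hsum_eq, sub_self]
  rcases mul_eq_zero.mp this with h | h
  · exact absurd (sub_eq_zero.mp h) key_ne
  · rw [hGsum, h]
end

section
/- Let ν be a positive integer and a a nonzero integer with α := ord_2(a) satisfying α = ν − 1. If b is an integer divisible by 2^α but not divisible by 2^ν, then G(a,b;2^ν) = 2^ν. -/
/-- Lemma 3.1 (2)(ii), first case: if `α := ord_2(a) = ν - 1`, `2^α ∣ b` and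
`2^ν ∤ b`, then `G(a,b;2^ν) = 2^ν`. -/
theorem gaussSum_eval_two_first_case (ν : ℕ) (hν : 1 ≤ ν) (a : ℤ) (ha : a ≠ 0)
    (α : ℕ) (hα : α = padicValInt 2 a) (hαν : α = ν - 1)
    (b : ℤ) (hb : (2 : ℤ) ^ α ∣ b) (hb' : ¬ (2 : ℤ) ^ ν ∣ b) :
    gaussSumG a b (2 ^ ν) = (2 : ℂ) ^ ν := by
  have hνα : ν = α + 1 := by omega
  haveI : Fact (Nat.Prime 2) := ⟨Nat.prime_two⟩
  -- a = 2^α * a' with a' odd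
  obtain ⟨a', ha'⟩ : (2 : ℤ) ^ α ∣ a := by
    rw [hα]; exact_mod_cast padicValInt_dvd (p := 2) a
  have ha'odd : Odd a' := by
    rw [← Int.not_even_iff_odd, even_iff_two_dvd]
    rintro ⟨a'', ha''⟩
    have : ((2 : ℤ)) ^ (α + 1) ∣ a := ⟨a'', by rw [ha', ha'', pow_succ]; ring⟩
    rw [show ((2:ℤ)) = ((2:ℕ):ℤ) by norm_num, padicValInt_dvd_iff] at this
    omega
  obtain ⟨b', hb1⟩ := hb
  have hb'odd : Odd b' := by
    rw [← Int.not_even_iff_odd, even_iff_two_dvd]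
    rintro ⟨b'', hb''⟩
    exact hb' ⟨b'', by rw [hb1, hb'', hνα, pow_succ]; ring⟩
  -- each summand is 1
  have key : ∀ n : ℕ, (2 : ℤ) ^ ν ∣ a * (n : ℤ) ^ 2 + b * n := by
    intro n
    have h2 : (2 : ℤ) ∣ a' * (n : ℤ) ^ 2 + b' * n := by
      rcases Int.even_or_odd (n : ℤ) with he | ho
      · have hsq : Even ((n:ℤ)^2) := by rw [sq]; exact he.mul_right _
        exact ((hsq.mul_left a').add ((he.mul_left b'))).two_dvd
      · have h1 : Odd (a' * (n : ℤ) ^ 2) := ha'odd.mul (ho.pow)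
        have h2 : Odd (b' * (n : ℤ)) := hb'odd.mul ho
        exact (h1.add_odd h2).two_dvd
    obtain ⟨m, hm⟩ := h2
    exact ⟨m, by rw [ha', hb1, hνα, pow_succ]; linear_combination (2:ℤ)^α * hm⟩
  unfold gaussSumG
  have hterm : ∀ n ∈ Finset.range (2 ^ ν),
      Complex.exp (2 * Real.pi * Complex.I *
        (((a * n ^ 2 + b * n : ℤ) : ℂ) / ((2 ^ ν : ℕ) : ℂ))) = 1 := by
    intro n _
    obtain ⟨m, hm⟩ := key n
    have hc : ((2 : ℂ)) ^ ν ≠ 0 := pow_ne_zero _ two_ne_zero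
    have : (((a * n ^ 2 + b * n : ℤ) : ℂ) / ((2 ^ ν : ℕ) : ℂ)) = (m : ℂ) := by
      rw [hm]
      push_cast
      field_simp
    rw [this, show 2 * (Real.pi : ℂ) * Complex.I * (m : ℂ)
        = (m : ℤ) * (2 * Real.pi * Complex.I) by push_cast; ring,
      Complex.exp_int_mul_two_pi_mul_I]
  rw [Finset.sum_congr rfl hterm, Finset.sum_const, Finset.card_range]
  push_cast
  ring
end

section
/- Let ν be a positive integer and a a positive integer with α := ord_2(a) satisfying 0 ≤ α < ν and ν ≡ α (mod 2). Let b be an integer divisible by 2^{α+1}. Then G(a,b;2^ν) = 2^{(ν+α)/2} · ( −2^{ν−α} / (a/2^α) ) · ε_{a/2^α} · (1+i) · e^{−2πi b² c₀ / 2^{ν+α+2}}, where ( · / (a/2^α) ) is the Jacobi symbol with odd lower entry a/2^α, and c₀ is any integer with (a/2^α)·c₀ ≡ 1 (mod 2^{ν+α+2}) (the value e^{−2πi b² c₀ / 2^{ν+α+2}} is independent of the choice of such c₀). -/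
/-- For an odd integer `j`, `ε_j = 1` if `j ≡ 1 (mod 4)` and `ε_j = i`
if `j ≡ 3 (mod 4)`. -/
noncomputable def epsFactorInt (j : ℤ) : ℂ := if j % 4 = 1 then 1 else Complex.I

section GaussAux
open Complex Finset

noncomputable def psiC (m : ℕ) (x : ℤ) : ℂ :=
  Complex.exp (2 * Real.pi * Complex.I * ((x : ℂ) / (2 : ℂ) ^ m))

lemma two_pow_ne (m : ℕ) : ((2:ℂ) ^ m) ≠ 0 := pow_ne_zero _ two_ne_zero

lemma psiC_add (m : ℕ) (x y : ℤ) : psiC m (x + y) = psiC m x * psiC m y := by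
  rw [psiC, psiC, psiC, ← Complex.exp_add]
  congr 1
  push_cast
  ring

lemma psiC_zero (m : ℕ) : psiC m 0 = 1 := by
  simp [psiC]

lemma psiC_mul_pow (m : ℕ) (k : ℤ) : psiC m (2 ^ m * k) = 1 := by
  rw [psiC]
  have h : 2 * (Real.pi:ℂ) * Complex.I * (((2 ^ m * k : ℤ) : ℂ) / (2:ℂ) ^ m)
      = k * (2 * Real.pi * Complex.I) := by
    push_cast
    field_simp
  rw [h, Complex.exp_int_mul_two_pi_mul_I]

lemma psiC_congr (m : ℕ) {x y : ℤ} (h : x ≡ y [ZMOD (2 ^ m : ℤ)]) :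
    psiC m x = psiC m y := by
  obtain ⟨k, hk⟩ := h.dvd
  have : x = y + 2 ^ m * (-k) := by linarith [hk]
  rw [this, psiC_add, psiC_mul_pow, mul_one]

lemma psiC_shift (m j : ℕ) (h : j ≤ m) (x : ℤ) :
    psiC m (2 ^ j * x) = psiC (m - j) x := by
  rw [psiC, psiC]
  congr 1
  have : (2:ℂ) ^ m = (2:ℂ) ^ (m - j) * 2 ^ j := by
    rw [← pow_add]; congr 1; omega
  rw [this]
  push_cast
  have h2 : ((2:ℂ) ^ j) ≠ 0 := two_pow_ne j
  have h3 : ((2:ℂ) ^ (m - j)) ≠ 0 := two_pow_ne (m - j)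
  field_simp

lemma psiC_one_odd (a : ℤ) (ha : a % 2 = 1) : psiC 1 a = -1 := by
  have : psiC 1 a = psiC 1 1 := by
    apply psiC_congr
    unfold Int.ModEq
    omega
  rw [this, psiC]
  have h : 2 * (Real.pi:ℂ) * Complex.I * (((1:ℤ) : ℂ) / (2:ℂ) ^ 1) = Real.pi * Complex.I := by
    push_cast; ring
  rw [h, Complex.exp_pi_mul_I]

lemma psiC_two_one : psiC 2 1 = Complex.I := by
  rw [psiC]
  have h : 2 * (Real.pi:ℂ) * Complex.I * (((1:ℤ) : ℂ) / (2:ℂ) ^ 2)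
      = (Real.pi / 2 : ℝ) * Complex.I := by
    push_cast; ring
  rw [h, Complex.exp_mul_I, ← Complex.ofReal_cos, ← Complex.ofReal_sin,
    Real.cos_pi_div_two, Real.sin_pi_div_two]
  simp


lemma sum_range_mul_decomp (f : ℕ → ℂ) (c k : ℕ) :
    ∑ n ∈ range (c * k), f n = ∑ j ∈ range k, ∑ i ∈ range c, f (c * j + i) := by
  induction k with
  | zero => simp
  | succ k ih =>
      rw [mul_add, mul_one, Finset.sum_range_add, ih, Finset.sum_range_succ]

lemma respects_congr {g : ℤ → ℂ} {c : ℕ}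
    (hg : ∀ x y : ℤ, x ≡ y [ZMOD (c : ℤ)] → g x = g y) (x y : ℤ)
    (h : x % c = y % c) : g x = g y := hg x y h

lemma sum_range_fold (g : ℤ → ℂ) (c k : ℕ)
    (hg : ∀ x y : ℤ, x ≡ y [ZMOD (c : ℤ)] → g x = g y) :
    ∑ n ∈ range (c * k), g n = (k : ℂ) * ∑ n ∈ range c, g n := by
  rw [sum_range_mul_decomp (fun n : ℕ => g n) c k]
  have h1 : ∀ j ∈ range k, (∑ i ∈ range c, g ((c * j + i : ℕ) : ℤ)) = ∑ i ∈ range c, g i := by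
    intro j _
    apply Finset.sum_congr rfl
    intro i _
    apply hg
    have : ((c * j + i : ℕ) : ℤ) = (i : ℤ) + (c : ℤ) * j := by push_cast; ring
    rw [this]
    simp [Int.ModEq, Int.add_mul_emod_self_left]
  rw [Finset.sum_congr rfl h1, Finset.sum_const, Finset.card_range, nsmul_eq_mul]


lemma sum_range_eq_sum_zmod (g : ℤ → ℂ) (c : ℕ) [NeZero c] :
    ∑ n ∈ range c, g n = ∑ z : ZMod c, g z.val := by
  refine Finset.sum_bij' (fun (n : ℕ) (_ : n ∈ range c) => (n : ZMod c))
    (fun (z : ZMod c) (_ : z ∈ Finset.univ) => z.val) ?_ ?_ ?_ ?_ ?_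
  · intro n _; exact Finset.mem_univ _
  · intro z _; exact Finset.mem_range.mpr z.val_lt
  · intro n hn; exact ZMod.val_cast_of_lt (Finset.mem_range.mp hn)
  · intro z _; exact ZMod.natCast_rightInverse z
  · intro n hn; simp [ZMod.val_cast_of_lt (Finset.mem_range.mp hn)]

lemma sum_range_shift (g : ℤ → ℂ) (c : ℕ) [NeZero c] (s : ℤ)
    (hg : ∀ x y : ℤ, x ≡ y [ZMOD (c : ℤ)] → g x = g y) :
    ∑ n ∈ range c, g (n + s) = ∑ n ∈ range c, g n := by
  have h1 : ∑ n ∈ range c, g (n + s) = ∑ z : ZMod c, g (z.val + s) :=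
    sum_range_eq_sum_zmod (fun x => g (x + s)) c
  have h2 : ∑ z : ZMod c, g (z.val + s) = ∑ z : ZMod c, g ((z + (s : ZMod c)).val) := by
    apply Finset.sum_congr rfl
    intro z _
    apply hg
    rw [← ZMod.intCast_eq_intCast_iff]
    push_cast [ZMod.natCast_val, ZMod.intCast_cast, ZMod.intCast_zmod_cast]
    simp
  rw [h1, h2, sum_range_eq_sum_zmod g c]
  exact Fintype.sum_equiv (Equiv.addRight ((s : ZMod c))) _ _ (fun z => rfl)


lemma respects_poly (m : ℕ) (p q : ℤ) (x y : ℤ) (h : x ≡ y [ZMOD ((2 ^ m : ℕ) : ℤ)]) :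
    psiC m (p * x ^ 2 + q * x) = psiC m (p * y ^ 2 + q * y) := by
  apply psiC_congr
  have h' : x ≡ y [ZMOD (2:ℤ) ^ m] := by push_cast at h; exact h
  exact ((h'.pow 2).mul_left p).add (h'.mul_left q)

lemma G0_base (a : ℤ) : ∑ n ∈ range (2 ^ 2), psiC 2 (a * (n : ℤ) ^ 2)
    = 2 * (1 + psiC 2 a) := by
  have e4 : psiC 2 (a * 4) = 1 := by
    have : psiC 2 (a * 4) = psiC 2 0 := by
      apply psiC_congr; unfold Int.ModEq; simp [Int.mul_emod]
    rw [this, psiC_zero]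
  have e9 : psiC 2 (a * 9) = psiC 2 a := by
    have h : a * 9 ≡ a [ZMOD (2:ℤ)^2] := by
      have : a * 9 = a + 4 * (2*a) := by ring
      rw [this]; simp [Int.ModEq, Int.add_mul_emod_self_left]
    exact psiC_congr 2 h
  show ∑ n ∈ range 4, psiC 2 (a * (n : ℤ) ^ 2) = _
  rw [Finset.sum_range_succ, Finset.sum_range_succ, Finset.sum_range_succ,
    Finset.sum_range_succ, Finset.sum_range_zero]
  push_cast
  rw [e4, e9, mul_zero, psiC_zero, mul_one]
  ring


lemma G0_val (a : ℤ) (ha : a % 2 = 1) (k : ℕ) :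
    ∑ n ∈ range (2 ^ (2 * k + 2)), psiC (2 * k + 2) (a * (n : ℤ) ^ 2)
      = 2 ^ (k + 1) * (1 + psiC 2 a) := by
  induction k with
  | zero => simpa using G0_base a
  | succ k ih =>
    have hexp : 2 * (k + 1) + 2 = (2 * k + 2) + 2 := by omega
    rw [hexp]
    set M := 2 * k + 2 with hM
    have hsplit : (2 : ℕ) ^ (M + 2) = 2 * 2 ^ (M + 1) := by ring
    rw [hsplit, sum_range_mul_decomp]
    have hin : ∀ j ∈ range (2 ^ (M + 1)),
        (∑ i ∈ range 2, psiC (M + 2) (a * ((2 * j + i : ℕ) : ℤ) ^ 2))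
        = psiC (M + 2) (a * ((2 * j : ℕ) : ℤ) ^ 2)
          + psiC (M + 2) (a * ((2 * j + 1 : ℕ) : ℤ) ^ 2) := by
      intro j _
      rw [Finset.sum_range_succ, Finset.sum_range_one]
      norm_num
    rw [Finset.sum_congr rfl hin, Finset.sum_add_distrib]
    have heven : ∑ j ∈ range (2 ^ (M + 1)), psiC (M + 2) (a * ((2 * j : ℕ) : ℤ) ^ 2)
        = 2 * (2 ^ (k + 1) * (1 + psiC 2 a)) := by
      have h1 : ∀ j ∈ range (2 ^ (M + 1)), psiC (M + 2) (a * ((2 * j : ℕ) : ℤ) ^ 2)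
          = psiC M (a * (j : ℤ) ^ 2) := by
        intro j _
        have h2 : a * ((2 * j : ℕ) : ℤ) ^ 2 = 2 ^ 2 * (a * (j : ℤ) ^ 2) := by push_cast; ring
        rw [h2, psiC_shift (M + 2) 2 (by omega)]
        congr 1
      rw [Finset.sum_congr rfl h1]
      have h3 : (2 : ℕ) ^ (M + 1) = 2 ^ M * 2 := by ring
      have hg : ∀ x y : ℤ, x ≡ y [ZMOD ((2 ^ M : ℕ) : ℤ)] →
          psiC M (a * x ^ 2) = psiC M (a * y ^ 2) := by
        intro x y h
        have := respects_poly M a 0 x y h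
        simpa using this
      rw [h3, sum_range_fold (fun x : ℤ => psiC M (a * x ^ 2)) (2 ^ M) 2 hg, ih]
      push_cast
      ring
    have hodd : ∑ j ∈ range (2 ^ (M + 1)), psiC (M + 2) (a * ((2 * j + 1 : ℕ) : ℤ) ^ 2)
        = 0 := by
      have h1 : ∀ j ∈ range (2 ^ (M + 1)), psiC (M + 2) (a * ((2 * j + 1 : ℕ) : ℤ) ^ 2)
          = psiC M (a * (j : ℤ) ^ 2 + a * (j : ℤ)) * psiC (M + 2) a := by
        intro j _
        have h2 : a * ((2 * j + 1 : ℕ) : ℤ) ^ 2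
            = 2 ^ 2 * (a * (j : ℤ) ^ 2 + a * (j : ℤ)) + a := by push_cast; ring
        rw [h2, psiC_add, psiC_shift (M + 2) 2 (by omega)]
        congr 2
      rw [Finset.sum_congr rfl h1, ← Finset.sum_mul]
      have hg : ∀ x y : ℤ, x ≡ y [ZMOD ((2 ^ M : ℕ) : ℤ)] →
          psiC M (a * x ^ 2 + a * x) = psiC M (a * y ^ 2 + a * y) :=
        fun x y h => respects_poly M a a x y h
      suffices hS : ∑ j ∈ range (2 ^ (M + 1)), psiC M (a * (j : ℤ) ^ 2 + a * (j : ℤ)) = 0 by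
        rw [hS, zero_mul]
      have h3 : (2 : ℕ) ^ (M + 1) = 2 ^ M * 2 := by ring
      rw [h3, sum_range_fold (fun x : ℤ => psiC M (a * x ^ 2 + a * x)) (2 ^ M) 2 hg]
      suffices hS0 : ∑ n ∈ range (2 ^ M), psiC M (a * (n : ℤ) ^ 2 + a * (n : ℤ)) = 0 by
        rw [hS0, mul_zero]
      haveI : NeZero ((2 : ℕ) ^ M) := ⟨pow_ne_zero _ two_ne_zero⟩
      have hshift := sum_range_shift (fun x : ℤ => psiC M (a * x ^ 2 + a * x)) (2 ^ M)
        ((2 : ℤ) ^ (2 * k + 1)) hg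
      have hneg : ∀ x : ℤ, psiC M (a * (x + 2 ^ (2 * k + 1)) ^ 2 + a * (x + 2 ^ (2 * k + 1)))
          = - psiC M (a * x ^ 2 + a * x) := by
        intro x
        have hid : a * (x + 2 ^ (2 * k + 1)) ^ 2 + a * (x + 2 ^ (2 * k + 1))
            = (a * x ^ 2 + a * x) + ((2 : ℤ) ^ (2 * k + 2) * (a * x + a * 2 ^ (2 * k))
              + 2 ^ (2 * k + 1) * a) := by ring
        rw [hid, psiC_add, psiC_add, psiC_add]
        have e1 : psiC M ((2 : ℤ) ^ (2 * k + 2) * (a * x + a * 2 ^ (2 * k))) = 1 := by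
          rw [hM]; exact psiC_mul_pow _ _
        have e2 : psiC M ((2 : ℤ) ^ (2 * k + 1) * a) = -1 := by
          rw [psiC_shift M (2 * k + 1) (by omega)]
          have : M - (2 * k + 1) = 1 := by omega
          rw [this]
          exact psiC_one_odd a ha
        rw [e1, e2]
        ring
      have hS0eq : ∑ n ∈ range (2 ^ M), psiC M (a * (n : ℤ) ^ 2 + a * (n : ℤ))
          = - ∑ n ∈ range (2 ^ M), psiC M (a * (n : ℤ) ^ 2 + a * (n : ℤ)) := by
        conv_lhs => rw [← hshift]
        rw [← Finset.sum_neg_distrib]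
        exact Finset.sum_congr rfl fun n _ => hneg n
      have h2 : (∑ n ∈ range (2 ^ M), psiC M (a * (n : ℤ) ^ 2 + a * (n : ℤ)))
          + ∑ n ∈ range (2 ^ M), psiC M (a * (n : ℤ) ^ 2 + a * (n : ℤ)) = 0 := by
        linear_combination hS0eq
      exact add_self_eq_zero.mp h2
    rw [heven, hodd, add_zero]
    ring


lemma psiC_two_neg_one : psiC 2 (-1) = -Complex.I := by
  rw [psiC]
  have h : 2 * (Real.pi:ℂ) * Complex.I * (((-1:ℤ) : ℂ) / (2:ℂ) ^ 2)
      = ((-(Real.pi / 2) : ℝ) : ℂ) * Complex.I := by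
    push_cast; ring
  rw [h, Complex.exp_mul_I, ← Complex.ofReal_cos, ← Complex.ofReal_sin,
    Real.cos_neg, Real.sin_neg, Real.cos_pi_div_two, Real.sin_pi_div_two]
  simp

lemma one_add_psiC_two (a : ℤ) (ha : a % 2 = 1) :
    1 + psiC 2 a = (if a % 4 = 1 then (1:ℂ) else -Complex.I) * (1 + Complex.I) := by
  rcases Int.emod_emod_of_dvd a (by norm_num : (2:ℤ) ∣ 4) ▸ ha with _
  have h4 : a % 4 = 1 ∨ a % 4 = 3 := by omega
  rcases h4 with h | h
  · have : psiC 2 a = psiC 2 1 := by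
      apply psiC_congr; unfold Int.ModEq; norm_num; omega
    rw [this, psiC_two_one, if_pos h]; ring
  · have : psiC 2 a = psiC 2 (-1) := by
      apply psiC_congr; unfold Int.ModEq; norm_num; omega
    rw [this, psiC_two_neg_one, if_neg (by omega)]
    rw [neg_mul]
    ring_nf
    rw [Complex.I_sq]
    ring

lemma jacobi_neg_two_pow (n : ℕ) (hn : n % 2 = 1) (k : ℕ) :
    jacobiSym (-(2:ℤ) ^ (2 * k)) n = if n % 4 = 1 then 1 else -1 := by
  have h1 : (-(2:ℤ) ^ (2 * k)) = (-1) * ((2:ℤ) ^ k) ^ 2 := by ring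
  have hcop : ((2:ℤ) ^ k).gcd n = 1 := by
    have : Nat.Coprime (2 ^ k) n :=
      Nat.Coprime.pow_left k ((Nat.prime_two.coprime_iff_not_dvd).mpr (by omega))
    simpa [Int.gcd, Int.natAbs_pow] using this
  rw [h1, jacobiSym.mul_left, jacobiSym.sq_one' hcop, mul_one,
    jacobiSym.at_neg_one (Nat.odd_iff.mpr hn), ZMod.χ₄_nat_eq_if_mod_four]
  have h2 : ¬ n % 2 = 0 := by omega
  simp [h2]

/-- Lemma 3.1 (2)(ii), second case: evaluation of `G(a,b;2^ν)` for a positive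
integer `a` with `α = ord_2(a) < ν`, `ν ≡ α (mod 2)` and `2^{α+1} ∣ b`; here `c₀`
is any integer with `(a/2^α)·c₀ ≡ 1 (mod 2^{ν+α+2})`. -/
theorem gaussSum_eval_two_second_case (ν : ℕ) (hν : 1 ≤ ν) (a : ℤ) (ha : 0 < a)
    (α : ℕ) (hα : α = padicValInt 2 a) (hαν : α < ν) (hpar : ν % 2 = α % 2)
    (b : ℤ) (hb : (2 : ℤ) ^ (α + 1) ∣ b)
    (c₀ : ℤ) (hc₀ : (a / (2 : ℤ) ^ α) * c₀ ≡ 1 [ZMOD ((2 : ℤ) ^ (ν + α + 2))]) :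
    gaussSumG a b (2 ^ ν) =
      (2 : ℂ) ^ (((ν : ℂ) + (α : ℂ)) / 2) *
        (jacobiSym (-(2 : ℤ) ^ (ν - α)) ((a / (2 : ℤ) ^ α).toNat) : ℂ) *
        epsFactorInt (a / (2 : ℤ) ^ α) * (1 + Complex.I) *
        Complex.exp (-(2 * Real.pi * Complex.I) *
          (((b ^ 2 * c₀ : ℤ) : ℂ) / ((2 : ℂ) ^ (ν + α + 2)))) := by
  -- decompose a
  set A : ℕ := a.toNat with hAdef
  have hA : (A : ℤ) = a := Int.toNat_of_nonneg ha.le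
  have hA0 : A ≠ 0 := by omega
  have hαA : α = padicValNat 2 A := by
    rw [hα, padicValInt]
    congr 1
    rw [Int.natAbs_eq_iff]
    left; exact hA.symm ▸ rfl
  set A' : ℕ := A / 2 ^ α with hA'def
  have hAfact : 2 ^ α * A' = A := by
    rw [hA'def, hαA]
    exact Nat.ordProj_mul_ordCompl_eq_self A 2
  have hA'odd : A' % 2 = 1 := by
    have h1 := Nat.not_dvd_ordCompl Nat.prime_two hA0
    rw [Nat.factorization_def A Nat.prime_two, ← hαA] at h1
    omega
  -- a' facts
  set a' : ℤ := a / 2 ^ α with ha'def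
  have ha'A : a' = (A' : ℤ) := by
    have h1 : a = 2 ^ α * (A' : ℤ) := by rw [← hA, ← hAfact]; push_cast; ring
    rw [ha'def, h1, Int.mul_ediv_cancel_left _ (by positivity)]
  have haa : a = 2 ^ α * a' := by rw [ha'A, ← hA, ← hAfact]; push_cast; ring
  have ha'odd : a' % 2 = 1 := by rw [ha'A]; omega
  have ha'toNat : a'.toNat = A' := by rw [ha'A]; exact Int.toNat_natCast A'
  obtain ⟨b'', hb''⟩ := hb
  set m := ν - α with hmdef
  have hνm : ν = m + α := by omega
  set k := m / 2 - 1 with hkdef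
  have hk : m = 2 * k + 2 := by omega
  obtain ⟨t, ht⟩ := hc₀.dvd
  -- ht : 1 - a' * c₀ = 2 ^ (ν + α + 2) * t
  -- step 1
  have step1 : gaussSumG a b (2 ^ ν)
      = ∑ n ∈ range (2 ^ ν), psiC ν (a * (n:ℤ) ^ 2 + b * (n:ℤ)) := by
    unfold gaussSumG psiC
    apply Finset.sum_congr rfl
    intro n _
    congr 1
    push_cast
    ring
  have hpt : ∀ n : ℕ, psiC ν (a * (n:ℤ) ^ 2 + b * (n:ℤ))
      = psiC m (a' * (n:ℤ) ^ 2 + 2 * b'' * (n:ℤ)) := by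
    intro n
    have h1 : a * (n:ℤ)^2 + b * (n:ℤ) = 2 ^ α * (a' * (n:ℤ)^2 + 2 * b'' * (n:ℤ)) := by
      rw [haa, hb'']; ring
    rw [h1, psiC_shift ν α (le_of_lt hαν)]
  have hgQ : ∀ x y : ℤ, x ≡ y [ZMOD ((2 ^ m : ℕ) : ℤ)] →
      psiC m (a' * x ^ 2 + 2 * b'' * x) = psiC m (a' * y ^ 2 + 2 * b'' * y) :=
    fun x y h => respects_poly m a' (2 * b'') x y h
  have h2ν : (2:ℕ) ^ ν = 2 ^ m * 2 ^ α := by rw [hνm, pow_add]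
  rw [step1, Finset.sum_congr rfl (fun n _ => hpt n), h2ν,
    sum_range_fold (fun x : ℤ => psiC m (a' * x ^ 2 + 2 * b'' * x)) (2 ^ m) (2 ^ α) hgQ]
  haveI : NeZero ((2:ℕ) ^ m) := ⟨pow_ne_zero _ two_ne_zero⟩
  have hshift := (sum_range_shift (fun x : ℤ => psiC m (a' * x ^ 2 + 2 * b'' * x)) (2 ^ m)
    (-(b'' * c₀)) hgQ).symm
  have hpt2 : ∀ x : ℤ, psiC m (a' * (x + -(b'' * c₀)) ^ 2 + 2 * b'' * (x + -(b'' * c₀)))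
      = psiC m (-(b'' ^ 2 * c₀)) * psiC m (a' * x ^ 2) := by
    intro x
    have hid : a' * (x + -(b'' * c₀)) ^ 2 + 2 * b'' * (x + -(b'' * c₀))
        = a' * x ^ 2 + (-(b'' ^ 2 * c₀) + 2 ^ (ν + α + 2) * (t * (2 * b'' * x - b'' ^ 2 * c₀))) := by
      linear_combination (2 * b'' * x - b'' ^ 2 * c₀) * ht
    rw [hid, psiC_add, psiC_add]
    have e1 : psiC m ((2:ℤ) ^ (ν + α + 2) * (t * (2 * b'' * x - b'' ^ 2 * c₀))) = 1 := by
      have hD : (2:ℤ) ^ (ν + α + 2) = 2 ^ m * 2 ^ (2 * α + 2) := by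
        rw [hνm, ← pow_add]
        congr 1
        omega
      rw [hD, mul_assoc, psiC_mul_pow]
    rw [e1, mul_one]
    ring
  rw [hshift, Finset.sum_congr rfl (fun (n : ℕ) _ => hpt2 (n : ℤ)), ← Finset.mul_sum]
  rw [hk]
  rw [G0_val a' ha'odd k]
  -- now the closed-form manipulations
  have hν2k : ν = 2 * k + 2 + α := by omega
  have hcpow : (2:ℂ) ^ (((ν:ℂ) + (α:ℂ)) / 2) = (2:ℂ) ^ (k + 1 + α : ℕ) := by
    have h1 : ((ν:ℂ) + (α:ℂ)) / 2 = ((k + 1 + α : ℕ) : ℂ) := by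
      rw [hν2k]; push_cast; ring
    rw [h1, Complex.cpow_natCast]
  have hjac : jacobiSym (-(2:ℤ) ^ (2 * k + 2)) a'.toNat
      = if A' % 4 = 1 then 1 else -1 := by
    rw [ha'toNat, show 2 * k + 2 = 2 * (k + 1) by ring, jacobi_neg_two_pow A' hA'odd (k + 1)]
  have ha'4 : a' % 4 = ((A' % 4 : ℕ) : ℤ) := by rw [ha'A]; omega
  have hcomb : (((if A' % 4 = 1 then (1:ℤ) else -1) : ℤ) : ℂ) * epsFactorInt a'
      * (1 + Complex.I) = 1 + psiC 2 a' := by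
    rw [one_add_psiC_two a' ha'odd, epsFactorInt]
    rcases (show A' % 4 = 1 ∨ A' % 4 = 3 by omega) with h | h
    · rw [if_pos h, if_pos (show a' % 4 = 1 by omega), if_pos (show a' % 4 = 1 by omega)]
      push_cast; ring
    · rw [if_neg (by omega), if_neg (show ¬ a' % 4 = 1 by omega),
        if_neg (show ¬ a' % 4 = 1 by omega)]
      push_cast; ring
  have hexp : psiC (2 * k + 2) (-(b'' ^ 2 * c₀))
      = Complex.exp (-(2 * Real.pi * Complex.I)
        * (((b ^ 2 * c₀ : ℤ) : ℂ) / ((2:ℂ) ^ (ν + α + 2)))) := by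
    rw [psiC, hb'']
    congr 1
    rw [show ν + α + 2 = (2 * k + 2) + (2 * α + 2) by omega, pow_add]
    push_cast
    have h1 : ((2:ℂ) ^ (2 * k + 2)) ≠ 0 := two_pow_ne _
    have h2 : ((2:ℂ) ^ (2 * α + 2)) ≠ 0 := two_pow_ne _
    field_simp
    ring
  rw [hcpow, hjac, hexp, ← hcomb]
  push_cast
  ring

end GaussAux
end
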